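/- A finite algebra (A, F) is a Ramsey algebra if and only if every nonempty subalgebra of (A, F) contains an idempotent element, i.e., an element a with f(a, a, ..., a) = a for all f ∈ F. -/

import Mathlib

namespace RamseyAlg

/- Orderly-term syntax trees over an operation-index type `ι`:
`leaf` is the identity (a single variable), `node g f` applies the basic
operation `g` to the results of the trees in the forest `f`. -/
mutual
  inductive OTree (ι : Type) : Type
    | leaf : OTree ι
    | node : ι → OForest ι → OTree ι
  inductive OForest (ι : Type) : Type
    | nil : OForest ι
    | cons : OTree ι → OForest ι → OForest ι
end

def OForest.length {ι : Type} : OForest ι → ℕ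
  | .nil => 0
  | .cons _ f => f.length + 1

/- Well-formedness: each node applies a `k`-ary basic operation to exactly
`k` subtrees, where `ar` gives the arities. -/
mutual
  def OTree.WF {ι : Type} (ar : ι → ℕ) : OTree ι → Prop
    | .leaf => True
    | .node g f => OForest.length f = ar g ∧ OForest.WF ar f
  def OForest.WF {ι : Type} (ar : ι → ℕ) : OForest ι → Prop
    | .nil => True
    | .cons t f => OTree.WF ar t ∧ OForest.WF ar f
end

/- Evaluation of an orderly term on an input list: the variables of the term
consume an initial segment of the list, in order, each exactly once; what
remains of the list is returned alongside the value. -/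
mutual
  def OTree.evalAux {ι A : Type} (F : ι → List A → A) :
      OTree ι → List A → Option (A × List A)
    | .leaf, [] => none
    | .leaf, a :: rest => some (a, rest)
    | .node g f, l =>
      match OForest.evalAux F f l with
      | none => none
      | some (rs, rest) => some (F g rs, rest)
  def OForest.evalAux {ι A : Type} (F : ι → List A → A) :
      OForest ι → List A → Option (List A × List A)
    | .nil, l => some ([], l)
    | .cons t f, l =>
      match OTree.evalAux F t l with
      | none => none
      | some (r, rest) =>
        match OForest.evalAux F f rest with
        | none => none
        | some (rs, rest') => some (r :: rs, rest')
end

/- The value of the orderly term `t` on the finite sequence `l`, defined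
exactly when the variables of `t` consume all of `l`. -/
def OTree.eval {ι A : Type} (F : ι → List A → A) (t : OTree ι) (l : List A) :
    Option A :=
  match OTree.evalAux F t l with
  | some (a, []) => some a
  | _ => none

/- `Reduction ar F a b` : `a` is a reduction of `b` with respect to `F`, i.e.
there are well-formed orderly terms `t j` applied to consecutive disjoint
finite subsequences of `b` (extracted by the strictly monotone `e`, in blocks
of lengths `len j`) producing the terms of `a` in order. -/
def Reduction {ι A : Type} (ar : ι → ℕ) (F : ι → List A → A)
    (a b : ℕ → A) : Prop :=
  ∃ (t : ℕ → OTree ι) (len : ℕ → ℕ) (e : ℕ → ℕ),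
    StrictMono e ∧ (∀ j, (t j).WF ar) ∧
    ∀ j, (t j).eval F ((List.range (len j)).map
        (fun i => b (e ((∑ m ∈ Finset.range j, len m) + i)))) = some (a j)

/- `FR ar F b` : the set of values of orderly terms over `F` applied to
finite subsequences of `b`. -/
def FR {ι A : Type} (ar : ι → ℕ) (F : ι → List A → A) (b : ℕ → A) : Set A :=
  { x | ∃ (t : OTree ι) (l : List ℕ), t.WF ar ∧ l.Chain' (· < ·) ∧
      t.eval F (l.map b) = some x }

/- `(A, F)` is a Ramsey algebra: every infinite sequence has, for every
`X ⊆ A`, a reduction homogeneous for `X`. -/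
def RamseyAlgebra {ι A : Type} (ar : ι → ℕ) (F : ι → List A → A) : Prop :=
  ∀ (b : ℕ → A) (X : Set A), ∃ a : ℕ → A,
    Reduction ar F a b ∧ (FR ar F a ⊆ X ∨ FR ar F a ∩ X = ∅)

end RamseyAlg

/-! If `(A, F)` is Ramsey and `A` is finite, homogenizing successively for every singleton
turns the constant sequence `c ∈ S` into a reduction `a` with `FR a = {a 0}`. As `FR` shrinks
under reduction, `a 0` lies in the subalgebra generated by `c`, and as `a` is then constant,
`{a 0}` is closed under `F`: `a 0` is idempotent.

Conversely, some `c` occurs infinitely often in `b`. The subalgebra generated by `c`, which is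
`FR` of the constant sequence `c`, contains an idempotent `x = u(c, …, c)`. Applying `u` to
consecutive blocks of occurrences of `c` reduces `b` to the constant sequence `x`, whose `FR`
is `{x}`. -/

namespace RamseyAlg

variable {ι A : Type} {ar : ι → ℕ} {F : ι → List A → A}

@[simp]
theorem OTree.evalAux_leaf_eq_some {l r : List A} {v : A} :
    OTree.evalAux F (.leaf : OTree ι) l = some (v, r) ↔ l = v :: r := by
  cases l <;> simp [OTree.evalAux, eq_comm]

@[simp]
theorem OTree.evalAux_node_eq_some {g : ι} {f : OForest ι} {l r : List A} {v : A} :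
    OTree.evalAux F (.node g f) l = some (v, r) ↔
      ∃ vs, OForest.evalAux F f l = some (vs, r) ∧ F g vs = v := by
  simp only [OTree.evalAux]
  rcases OForest.evalAux F f l with _ | ⟨vs, rest⟩ <;> simp [and_comm, eq_comm]

@[simp]
theorem OForest.evalAux_nil_eq_some {l r vs : List A} :
    OForest.evalAux F (.nil : OForest ι) l = some (vs, r) ↔ vs = [] ∧ r = l := by
  simp [OForest.evalAux, eq_comm]

@[simp]
theorem OForest.evalAux_cons_eq_some {t : OTree ι} {f : OForest ι} {l r vs : List A} :
    OForest.evalAux F (.cons t f) l = some (vs, r) ↔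
      ∃ v rest vs', OTree.evalAux F t l = some (v, rest) ∧
        OForest.evalAux F f rest = some (vs', r) ∧ vs = v :: vs' := by
  simp only [OForest.evalAux]
  rcases OTree.evalAux F t l with _ | ⟨v, rest⟩
  · simp
  · rcases h : OForest.evalAux F f rest with _ | ⟨vs', r'⟩ <;> simp [h, eq_comm, and_comm]

theorem OTree.eval_eq_some {t : OTree ι} {l : List A} {v : A} :
    t.eval F l = some v ↔ OTree.evalAux F t l = some (v, []) := by
  unfold OTree.eval
  split <;> simp_all

mutual
theorem OTree.evalAux_append {l r : List A} {v : A} (l' : List A) :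
    ∀ {t : OTree ι}, OTree.evalAux F t l = some (v, r) →
      OTree.evalAux F t (l ++ l') = some (v, r ++ l')
  | .leaf, h => by simp_all
  | .node g f, h => by
    obtain ⟨vs, hf, rfl⟩ := OTree.evalAux_node_eq_some.1 h
    exact OTree.evalAux_node_eq_some.2 ⟨vs, OForest.evalAux_append l' hf, rfl⟩
theorem OForest.evalAux_append {l r vs : List A} (l' : List A) :
    ∀ {f : OForest ι}, OForest.evalAux F f l = some (vs, r) →
      OForest.evalAux F f (l ++ l') = some (vs, r ++ l')
  | .nil, h => by simp_all
  | .cons t f, h => by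
    obtain ⟨v, rest, vs', ht, hf, rfl⟩ := OForest.evalAux_cons_eq_some.1 h
    exact OForest.evalAux_cons_eq_some.2
      ⟨v, _, vs', OTree.evalAux_append l' ht, OForest.evalAux_append l' hf, rfl⟩
end


def IsSubalgebra (ar : ι → ℕ) (F : ι → List A → A) (S : Set A) : Prop :=
  ∀ i (l : List A), l.length = ar i → (∀ x ∈ l, x ∈ S) → F i l ∈ S

mutual
theorem OTree.evalAux_mem {S : Set A} (hS : IsSubalgebra ar F S) {l r : List A} {v : A} (hl : ∀ x ∈ l, x ∈ S) :
    ∀ {t : OTree ι}, t.WF ar → OTree.evalAux F t l = some (v, r) →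
      v ∈ S ∧ ∀ x ∈ r, x ∈ S
  | .leaf, _, h => by
    rw [OTree.evalAux_leaf_eq_some.1 h] at hl
    exact ⟨hl v List.mem_cons_self, fun x hx => hl x (List.mem_cons_of_mem v hx)⟩
  | .node g f, ⟨hlen, hwf⟩, h => by
    obtain ⟨vs, hf, rfl⟩ := OTree.evalAux_node_eq_some.1 h
    obtain ⟨hvs, hvslen, hr⟩ := OForest.evalAux_mem hS hl hwf hf
    exact ⟨hS g vs (hvslen.trans hlen) hvs, hr⟩
theorem OForest.evalAux_mem {S : Set A} (hS : IsSubalgebra ar F S) {l r vs : List A} (hl : ∀ x ∈ l, x ∈ S) :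
    ∀ {f : OForest ι}, f.WF ar → OForest.evalAux F f l = some (vs, r) →
      (∀ x ∈ vs, x ∈ S) ∧ vs.length = f.length ∧ ∀ x ∈ r, x ∈ S
  | .nil, _, h => by
    obtain ⟨rfl, rfl⟩ := OForest.evalAux_nil_eq_some.1 h
    exact ⟨by simp, rfl, hl⟩
  | .cons t f, ⟨ht, hf⟩, h => by
    obtain ⟨v, rest, vs', htv, hfv, rfl⟩ := OForest.evalAux_cons_eq_some.1 h
    obtain ⟨hv, hrest⟩ := OTree.evalAux_mem hS hl ht htv
    obtain ⟨hvs', hlen, hr⟩ := OForest.evalAux_mem hS hrest hf hfv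
    exact ⟨List.forall_mem_cons.2 ⟨hv, hvs'⟩, by simp [OForest.length, hlen], hr⟩
end

theorem FR_subset_of_isSubalgebra {S : Set A} (hS : IsSubalgebra ar F S) {b : ℕ → A} (hb : ∀ n, b n ∈ S) : FR ar F b ⊆ S := by
  rintro x ⟨t, l, ht, -, hx⟩
  refine (OTree.evalAux_mem hS ?_ ht (OTree.eval_eq_some.1 hx)).1
  simpa using fun n _ => hb n

theorem isSubalgebra_singleton_iff {x : A} :
    IsSubalgebra ar F {x} ↔ ∀ i, F i (List.replicate (ar i) x) = x := by
  refine ⟨fun h i => h i _ List.length_replicate fun y hy => List.eq_of_mem_replicate hy,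
    fun h i l hlen hl => ?_⟩
  rw [List.eq_replicate_iff.2 ⟨hlen, hl⟩]
  exact h i


section Substitution

variable {a b : ℕ → A} {t : ℕ → OTree ι} {blk : ℕ → List ℕ}

mutual
/-- Substituting `t j` for the variable reading `a j` turns a term over `a` into one over `b`;
the variables consumed are those of the blocks `blk j` of the consumed prefix `l₁`. -/
theorem OTree.exists_subst (ht : ∀ j, (t j).WF ar)
    (hev : ∀ j, OTree.evalAux F (t j) ((blk j).map b) = some (a j, [])) :
    ∀ {u : OTree ι}, u.WF ar → ∀ {l : List ℕ} {v : A} {rest : List A},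
      OTree.evalAux F u (l.map a) = some (v, rest) →
      ∃ l₁ l₂, l = l₁ ++ l₂ ∧ rest = l₂.map a ∧
        ∃ u' : OTree ι, u'.WF ar ∧ OTree.evalAux F u' ((l₁.flatMap blk).map b) = some (v, [])
  | .leaf, _, _, _, _, h => by
    obtain ⟨j, l₂, rfl, rfl, rfl⟩ := List.map_eq_cons_iff.1 (OTree.evalAux_leaf_eq_some.1 h)
    exact ⟨[j], l₂, rfl, rfl, t j, ht j, by simpa using hev j⟩
  | .node g f, ⟨hlen, hwf⟩, _, _, _, h => by
    obtain ⟨vs, hf, rfl⟩ := OTree.evalAux_node_eq_some.1 h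
    obtain ⟨l₁, l₂, rfl, rfl, f', hwf', hlen', hf'⟩ := OForest.exists_subst ht hev hwf hf
    exact ⟨l₁, l₂, rfl, rfl, .node g f', ⟨hlen'.trans hlen, hwf'⟩,
      OTree.evalAux_node_eq_some.2 ⟨vs, hf', rfl⟩⟩
theorem OForest.exists_subst (ht : ∀ j, (t j).WF ar)
    (hev : ∀ j, OTree.evalAux F (t j) ((blk j).map b) = some (a j, [])) :
    ∀ {f : OForest ι}, f.WF ar → ∀ {l : List ℕ} {vs rest : List A},
      OForest.evalAux F f (l.map a) = some (vs, rest) →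
      ∃ l₁ l₂, l = l₁ ++ l₂ ∧ rest = l₂.map a ∧
        ∃ f' : OForest ι, f'.WF ar ∧ f'.length = f.length ∧
          OForest.evalAux F f' ((l₁.flatMap blk).map b) = some (vs, [])
  | .nil, _, l, _, _, h => by
    obtain ⟨rfl, rfl⟩ := OForest.evalAux_nil_eq_some.1 h
    exact ⟨[], l, rfl, rfl, .nil, trivial, rfl, by simp⟩
  | .cons u f, ⟨hu, hf⟩, _, _, _, h => by
    obtain ⟨v, rest, vs', huv, hfv, rfl⟩ := OForest.evalAux_cons_eq_some.1 h
    obtain ⟨l₁, l₂, rfl, rfl, u', hu', hu'v⟩ := OTree.exists_subst ht hev hu huv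
    obtain ⟨l₃, l₄, rfl, rfl, f', hf', hlen', hf'v⟩ := OForest.exists_subst ht hev hf hfv
    refine ⟨l₁ ++ l₃, l₄, (List.append_assoc ..).symm, rfl, .cons u' f', ⟨hu', hf'⟩,
      by simp [OForest.length, hlen'], ?_⟩
    rw [List.flatMap_append, List.map_append]
    exact OForest.evalAux_cons_eq_some.2
      ⟨v, _, vs', OTree.evalAux_append _ hu'v, hf'v, rfl⟩
end

end Substitution

def block (len e : ℕ → ℕ) (j : ℕ) : List ℕ :=
  (List.range (len j)).map fun i => e ((∑ m ∈ Finset.range j, len m) + i)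

theorem isChain_flatMap_block {len e : ℕ → ℕ} (he : StrictMono e) {l : List ℕ}
    (hl : l.IsChain (· < ·)) : (l.flatMap (block len e)).IsChain (· < ·) := by
  rw [List.isChain_iff_pairwise] at hl ⊢
  refine List.pairwise_flatMap.2 ⟨fun j _ => ?_, hl.imp fun {j j'} hjj' => ?_⟩
  · exact List.pairwise_map.2 (List.pairwise_lt_range.imp fun h => he (by omega))
  · simp only [block, List.mem_map, List.mem_range]
    rintro _ ⟨i, hi, rfl⟩ _ ⟨i', -, rfl⟩
    apply he
    have : ∑ m ∈ Finset.range (j + 1), len m ≤ ∑ m ∈ Finset.range j', len m :=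
      Finset.sum_le_sum_of_subset (Finset.range_subset_range.2 hjj')
    rw [Finset.sum_range_succ] at this
    omega

theorem Reduction.FR_subset {a b : ℕ → A} (h : Reduction ar F a b) :
    FR ar F a ⊆ FR ar F b := by
  obtain ⟨t, len, e, he, ht, hev⟩ := h
  have hev' : ∀ j, OTree.evalAux F (t j) ((block len e j).map b) = some (a j, []) := fun j =>
    OTree.eval_eq_some.1 (by simpa [block, Function.comp_def] using hev j)
  rintro x ⟨u, l, hu, hl, hx⟩
  obtain ⟨l₁, l₂, rfl, hl₂, u', hu', hu'x⟩ :=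
    OTree.exists_subst ht hev' hu (OTree.eval_eq_some.1 hx)
  obtain rfl : l₂ = [] := List.map_eq_nil_iff.1 hl₂.symm
  rw [List.append_nil] at hl
  exact ⟨u', l₁.flatMap (block len e), hu', isChain_flatMap_block he hl,
    OTree.eval_eq_some.2 hu'x⟩


theorem mem_FR_self (b : ℕ → A) (n : ℕ) : b n ∈ FR ar F b :=
  ⟨.leaf, [n], trivial, List.isChain_singleton n, by simp [OTree.eval_eq_some]⟩

theorem mem_FR_const_iff {c x : A} :
    x ∈ FR ar F (fun _ => c) ↔
      ∃ (u : OTree ι) (n : ℕ), u.WF ar ∧ OTree.evalAux F u (List.replicate n c) = some (x, []) := by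
  constructor
  · rintro ⟨u, l, hu, -, hx⟩
    exact ⟨u, l.length, hu, by simpa [OTree.eval_eq_some, List.map_const'] using hx⟩
  · rintro ⟨u, n, hu, hx⟩
    exact ⟨u, List.range n, hu, List.isChain_iff_pairwise.2 List.pairwise_lt_range,
      by simpa [OTree.eval_eq_some, List.map_const'] using hx⟩

theorem exists_forest_evalAux_replicate {c : A} : ∀ {l : List A},
    (∀ x ∈ l, ∃ (u : OTree ι) (n : ℕ), u.WF ar ∧
      OTree.evalAux F u (List.replicate n c) = some (x, [])) →
    ∃ (f : OForest ι) (n : ℕ), f.WF ar ∧ f.length = l.length ∧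
      OForest.evalAux F f (List.replicate n c) = some (l, [])
  | [], _ => ⟨.nil, 0, trivial, rfl, by simp⟩
  | x :: l, h => by
    obtain ⟨u, n₁, hu, hux⟩ := h x List.mem_cons_self
    obtain ⟨f, n₂, hf, hlen, hfl⟩ :=
      exists_forest_evalAux_replicate fun y hy => h y (List.mem_cons_of_mem x hy)
    refine ⟨.cons u f, n₁ + n₂, ⟨hu, hf⟩, by simp [OForest.length, hlen], ?_⟩
    rw [List.replicate_add]
    exact OForest.evalAux_cons_eq_some.2 ⟨x, _, l, OTree.evalAux_append _ hux, hfl, rfl⟩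

theorem isSubalgebra_FR_const (c : A) : IsSubalgebra ar F (FR ar F fun _ => c) := by
  intro i l hlen hl
  obtain ⟨f, n, hf, hflen, hfl⟩ :=
    exists_forest_evalAux_replicate fun x hx => mem_FR_const_iff.1 (hl x hx)
  exact mem_FR_const_iff.2
    ⟨.node i f, n, ⟨hflen.trans hlen, hf⟩, OTree.evalAux_node_eq_some.2 ⟨l, hfl, rfl⟩⟩

theorem reduction_const_of_infinite_fiber {b : ℕ → A} {c x : A} (hc : (b ⁻¹' {c}).Infinite)
    {u : OTree ι} {n : ℕ} (hu : u.WF ar)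
    (hux : OTree.evalAux F u (List.replicate n c) = some (x, [])) :
    Reduction ar F (fun _ => x) b := by
  refine ⟨fun _ => u, fun _ => n, Nat.nth (b · = c), Nat.nth_strictMono hc, fun _ => hu,
    fun j => OTree.eval_eq_some.2 ?_⟩
  convert hux
  exact List.eq_replicate_iff.2 ⟨by simp, by simpa using fun _ _ => Nat.nth_mem_of_infinite hc _⟩

theorem RamseyAlgebra.exists_FR_subset_homogeneous (hR : RamseyAlgebra ar F)
    {𝒳 : Set (Set A)} (h𝒳 : 𝒳.Finite) (b : ℕ → A) :
    ∃ a, FR ar F a ⊆ FR ar F b ∧ ∀ X ∈ 𝒳, FR ar F a ⊆ X ∨ FR ar F a ∩ X = ∅ := by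
  induction 𝒳, h𝒳 using Set.Finite.induction_on with
  | empty => exact ⟨b, subset_rfl, by simp⟩
  | @insert X 𝒳 _ _ ih =>
    obtain ⟨a₁, hsub₁, hhom₁⟩ := ih
    obtain ⟨a₂, hred, hX⟩ := hR a₁ X
    have hsub₂ := hred.FR_subset
    refine ⟨a₂, hsub₂.trans hsub₁, Set.forall_mem_insert.2 ⟨hX, fun Y hY => ?_⟩⟩
    refine (hhom₁ Y hY).imp hsub₂.trans fun h => ?_
    exact Set.subset_empty_iff.1 (h ▸ Set.inter_subset_inter_left Y hsub₂)

theorem RamseyAlgebra.exists_FR_subset_eq_singleton [Finite A] (hR : RamseyAlgebra ar F)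
    (b : ℕ → A) : ∃ a, FR ar F a ⊆ FR ar F b ∧ FR ar F a = {a 0} := by
  obtain ⟨a, hsub, hhom⟩ :=
    hR.exists_FR_subset_homogeneous (Set.finite_range fun y : A => ({y} : Set A)) b
  have ha₀ : a 0 ∈ FR ar F a := mem_FR_self a 0
  refine ⟨a, hsub, Set.Subset.antisymm ?_ (Set.singleton_subset_iff.2 ha₀)⟩
  refine (hhom _ ⟨a 0, rfl⟩).resolve_right fun h => ?_
  exact (Set.eq_empty_iff_forall_notMem.1 h) (a 0) ⟨ha₀, rfl⟩

end RamseyAlg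

open RamseyAlg in
/-- A finite algebra `(A, F)` is a Ramsey algebra iff every nonempty
subalgebra contains an idempotent element, i.e. some `a` with
`f(a, ..., a) = a` for every `f ∈ F`. -/
theorem stmt15 (ι A : Type) [Finite A] (ar : ι → ℕ) (F : ι → List A → A) :
    RamseyAlgebra ar F ↔
      ∀ S : Set A,
        (∀ i (l : List A), l.length = ar i → (∀ x ∈ l, x ∈ S) → F i l ∈ S) →
        S.Nonempty →
        ∃ a ∈ S, ∀ i, F i (List.replicate (ar i) a) = a := by
  constructor
  · rintro hR S hS ⟨c, hc⟩
    obtain ⟨a, hsub, hsing⟩ := hR.exists_FR_subset_eq_singleton fun _ => c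
    have hconst : a = fun _ => a 0 := funext fun j => (hsing ▸ mem_FR_self a j : a j ∈ ({a 0} : Set A))
    refine ⟨a 0, FR_subset_of_isSubalgebra hS (fun _ => hc) (hsub (mem_FR_self a 0)),
      isSubalgebra_singleton_iff.1 ?_⟩
    rw [← hsing, hconst]
    exact isSubalgebra_FR_const (a 0)
  · intro hidem b X
    obtain ⟨c, hc⟩ := Finite.exists_infinite_fiber b
    obtain ⟨x, hx, hxidem⟩ := hidem _ (isSubalgebra_FR_const c) ⟨c, mem_FR_self _ 0⟩
    obtain ⟨u, n, hu, hux⟩ := mem_FR_const_iff.1 hx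
    have hFR : FR ar F (fun _ => x) ⊆ {x} :=
      FR_subset_of_isSubalgebra (isSubalgebra_singleton_iff.2 hxidem) fun _ => rfl
    refine ⟨fun _ => x, reduction_const_of_infinite_fiber (Set.infinite_coe_iff.1 hc) hu hux, ?_⟩
    by_cases hxX : x ∈ X
    · exact Or.inl (hFR.trans (Set.singleton_subset_iff.2 hxX))
    · exact Or.inr (Set.eq_empty_of_forall_notMem fun y ⟨hy, hyX⟩ => hxX (hFR hy ▸ hyX))
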